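/- During the balanced interval, if the queueing time for a vehicle arriving at t ∈ (t₁, t*] is Υ(t) = (β/α)(t − t₁) and the arrival cumulative flow is G(t) = G(t₁) + C(t − t₁) with F(t₁) = G(t₁), then the FIFO relation F(t − Υ(t)) = G(t) implies the departure flow-rate is the constant f = C/(1 − β/α) on the corresponding departure time interval; this is well-defined (positive and finite) if and only if α > β. -/
import Mathlib


theorem balanced_departure_rate_early
    (C α β tstar t₁ : ℝ) (hC : 0 < C) (hα : 0 < α) (hβ : 0 < β)
    (ht₁ : t₁ < tstar)
    (F G Υ : ℝ → ℝ)
    (hΥ : ∀ t ∈ Set.Ioc t₁ tstar, Υ t = (β / α) * (t - t₁))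
    (hG : ∀ t ∈ Set.Ioc t₁ tstar, G t = G t₁ + C * (t - t₁))
    (hFG : F t₁ = G t₁)
    (hFIFO : ∀ t ∈ Set.Ioc t₁ tstar, F (t - Υ t) = G t) :
    (β < α → ∀ t ∈ Set.Ioc t₁ tstar,
      F (t - (β / α) * (t - t₁)) =
        F t₁ + (C / (1 - β / α)) * ((t - (β / α) * (t - t₁)) - t₁)) ∧
    (0 < C / (1 - β / α) ↔ β < α) := by
  constructor
  · intro hβα t ht
    have hne : 1 - β / α ≠ 0 := by
      have : β / α < 1 := (div_lt_one hα).mpr hβα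
      linarith
    have h1 := hFIFO t ht
    rw [hΥ t ht, hG t ht] at h1
    rw [h1, hFG, show (t - β / α * (t - t₁)) - t₁ = (1 - β / α) * (t - t₁) from by ring,
      div_mul_eq_mul_div, mul_comm (1 - β / α) (t - t₁), ← mul_assoc,
      mul_div_assoc, div_self hne, mul_one]
  · constructor
    · intro h
      by_contra hle
      push_neg at hle
      have : β / α ≥ 1 := (one_le_div hα).mpr hle
      have h2 : 1 - β / α ≤ 0 := by linarith
      have := div_nonpos_of_nonneg_of_nonpos hC.le h2
      rcases lt_or_eq_of_le h2 with h3 | h3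
      · linarith
      · rw [h3] at h; simp at h
    · intro hβα
      have : 0 < 1 - β / α := by
        have : β / α < 1 := (div_lt_one hα).mpr hβα
        linarith
      exact div_pos hC this
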